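/- The element ϖ is nonzero in the free Lie algebra over ℤ on three generators a, b, c. -/

import Mathlib

/-- Left-normed Lie bracket `[u₁,…,u₆] = [[[[[u₁,u₂],u₃],u₄],u₅],u₆]`. -/
def lb6 {L : Type*} [LieRing L] (u1 u2 u3 u4 u5 u6 : L) : L :=
  ⁅⁅⁅⁅⁅u1, u2⁆, u3⁆, u4⁆, u5⁆, u6⁆

/-- The 12-term element `ϖ`, as a function of the generators `a`, `b`, `c`. -/
def varpi {L : Type*} [LieRing L] (a b c : L) : L :=
  lb6 c a b b a c + lb6 c a c b a b + lb6 c b a c a b + lb6 c b a c b a +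
  lb6 c b b a a c + lb6 c b c b a a - lb6 c a c a b b - lb6 c a c b b a -
  lb6 c b a a c b - lb6 c b a b a c - lb6 c b b a c a - lb6 c b c a b a

attribute [local instance 100] LieRing.ofAssociativeRing

def Mw : Fin 3 → Matrix (Fin 3) (Fin 3) ℤ
  | 0 => !![0, 0, 1; 0, 1, 1; 1, 1, 0]
  | 1 => !![0, 1, 0; 1, 1, 0; 1, 1, 0]
  | 2 => !![0, 1, 0; 0, 0, 0; 1, 0, 1]

lemma varpi_Mw_ne_zero : varpi (Mw 0) (Mw 1) (Mw 2) ≠ 0 := by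
  intro h
  have h00 : (varpi (Mw 0) (Mw 1) (Mw 2)) 0 0 = 0 := by rw [h]; rfl
  revert h00
  simp only [varpi, lb6, Ring.lie_def, Mw]
  norm_num [Matrix.mul_fin_three, Matrix.sub_apply, Matrix.add_apply]

set_option maxRecDepth 4000

/-- **The element `ϖ` is nonzero** in the free Lie algebra over `ℤ` on three
generators `a = of 0`, `b = of 1`, `c = of 2`. -/
theorem varpi_ne_zero :
    varpi (FreeLieAlgebra.of ℤ (0 : Fin 3)) (FreeLieAlgebra.of ℤ (1 : Fin 3))
      (FreeLieAlgebra.of ℤ (2 : Fin 3)) ≠ 0 := by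
  intro h
  apply varpi_Mw_ne_zero
  have := congrArg (FreeLieAlgebra.lift ℤ Mw) h
  rw [map_zero] at this
  rw [← this]
  simp only [varpi, lb6, map_add, map_sub, LieHom.map_lie,
    FreeLieAlgebra.lift_of_apply]
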